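/- With A_w as in the Cartan matrix of w for G₂ (rows (0,3,−2,3,−2), (0,0,1,−2,1), (0,0,0,3,−2), (0,0,0,0,1), (0,0,0,0,0)), the value T_{A_w}[(x_1x_2x_3 + x_1x_2x_5 + x_1x_4x_5 + x_3x_4x_5)(x_2x_3 + x_2x_5 + x_4x_5)] equals 1. -/

import Mathlib

/-!
One elimination step of `T_A` is additive and sends `c · x^m · x_k^r` to `0` if `r = 0` and to
`c · x^m · (a_{1,k}x_1 + ⋯ + a_{k-1,k}x_{k-1})^{r-1}` otherwise. Mirroring this rule on explicit
lists of (coefficient, exponent vector) pairs gives a computable version of `T_A` that provably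
agrees with it, so the value on the product, multiplied out as such a list, is obtained by
evaluating that version in the kernel.
-/

open MvPolynomial

/-- One elimination step of the triangular operator: writing `f = Σ_r h_r · x_k^r`
(`x_k` the last variable), it returns `Σ_{r ≥ 1} h_r · (a_{1,k}x_1 + ⋯ + a_{k-1,k}x_{k-1})^{r-1}`. -/
noncomputable def triStep (k : ℕ) (A : ℕ → ℕ → ℤ) (f : MvPolynomial (Fin (k + 1)) ℤ) :
    MvPolynomial (Fin k) ℤ :=
  f.support.sum fun m =>
    if m (Fin.last k) = 0 then 0
    else
      MvPolynomial.C (f.coeff m) *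
        MvPolynomial.monomial (Finsupp.equivFunOnFinite.symm fun i : Fin k => m (Fin.castSucc i)) 1 *
        (∑ i : Fin k, MvPolynomial.C (A i k) * MvPolynomial.X i) ^ (m (Fin.last k) - 1)

/-- The triangular operator `T_A` of Definition 2, associated to a strictly upper
triangular integer matrix `A = (a_{i,j})` (indexed here from `0`). -/
noncomputable def Tri : (k : ℕ) → (A : ℕ → ℕ → ℤ) → MvPolynomial (Fin k) ℤ → ℤ
  | 0, _, f => f.coeff 0
  | (k + 1), A, f => Tri k A (triStep k A f)

/-- The Cartan matrix `A_w` of `w = σ_{β₂}σ_{β₁}σ_{β₂}σ_{β₁}σ_{β₂}` in `G₂`. -/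
def Aw : ℕ → ℕ → ℤ := fun i j =>
  (([[0, 3, -2, 3, -2], [0, 0, 1, -2, 1], [0, 0, 0, 3, -2],
     [0, 0, 0, 0, 1], [0, 0, 0, 0, 0]] : List (List ℤ)).getD i []).getD j 0

abbrev TermList (σ R : Type*) := List (R × (σ → ℕ))

namespace TermList

variable {σ R : Type*}

def mul [Mul R] (a b : TermList σ R) : TermList σ R :=
  a.flatMap fun s => b.map fun t => (s.1 * t.1, s.2 + t.2)

def pow [One R] [Mul R] (l : TermList σ R) : ℕ → TermList σ R
  | 0 => [(1, 0)]
  | n + 1 => mul l (pow l n)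

section Eval

variable [Finite σ] [CommSemiring R]

noncomputable def toMvPolynomial (l : TermList σ R) : MvPolynomial σ R :=
  (l.map fun t => monomial (Finsupp.equivFunOnFinite.symm t.2) t.1).sum

@[simp]
theorem toMvPolynomial_nil : toMvPolynomial ([] : TermList σ R) = 0 := rfl

@[simp]
theorem toMvPolynomial_cons (t : R × (σ → ℕ)) (l : TermList σ R) :
    toMvPolynomial (t :: l) = monomial (Finsupp.equivFunOnFinite.symm t.2) t.1 + toMvPolynomial l :=
  List.sum_cons

@[simp]
theorem toMvPolynomial_append (a b : TermList σ R) :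
    toMvPolynomial (a ++ b) = toMvPolynomial a + toMvPolynomial b := by
  simp [toMvPolynomial]

theorem toMvPolynomial_map_mul (s : R × (σ → ℕ)) (l : TermList σ R) :
    toMvPolynomial (l.map fun t => (s.1 * t.1, s.2 + t.2)) =
      monomial (Finsupp.equivFunOnFinite.symm s.2) s.1 * toMvPolynomial l := by
  induction l with
  | nil => simp
  | cons t l ih =>
    have hexp : Finsupp.equivFunOnFinite.symm (s.2 + t.2) =
        Finsupp.equivFunOnFinite.symm s.2 + Finsupp.equivFunOnFinite.symm t.2 :=
      Finsupp.ext fun _ => rfl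
    rw [List.map_cons, toMvPolynomial_cons, toMvPolynomial_cons, ih, mul_add, monomial_mul, ← hexp]

@[simp]
theorem toMvPolynomial_mul (a b : TermList σ R) :
    toMvPolynomial (mul a b) = toMvPolynomial a * toMvPolynomial b := by
  induction a with
  | nil => simp [mul]
  | cons s a ih =>
    have hmul : mul (s :: a) b = (b.map fun t => (s.1 * t.1, s.2 + t.2)) ++ mul a b := rfl
    rw [hmul, toMvPolynomial_append, ih, toMvPolynomial_map_mul, toMvPolynomial_cons, add_mul]

@[simp]
theorem toMvPolynomial_pow (l : TermList σ R) (n : ℕ) :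
    toMvPolynomial (pow l n) = toMvPolynomial l ^ n := by
  induction n with
  | zero =>
    rw [pow, toMvPolynomial_cons, toMvPolynomial_nil, add_zero, pow_zero,
      show Finsupp.equivFunOnFinite.symm (0 : σ → ℕ) = 0 from Finsupp.ext fun _ => rfl,
      monomial_zero', C_1]
  | succ n ih => rw [pow, toMvPolynomial_mul, ih, pow_succ']

theorem coeff_zero_toMvPolynomial [IsEmpty σ] (l : TermList σ R) :
    l.toMvPolynomial.coeff 0 = (l.map Prod.fst).sum := by
  induction l with
  | nil => simp
  | cons t l ih =>
    rw [toMvPolynomial_cons, coeff_add, ih, Subsingleton.elim (Finsupp.equivFunOnFinite.symm t.2) 0,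
      coeff_monomial, if_pos rfl, List.map_cons, List.sum_cons]

end Eval

def linearForm (k : ℕ) (A : ℕ → ℕ → ℤ) : TermList (Fin k) ℤ :=
  (List.finRange k).map fun i : Fin k => (A i k, Pi.single i 1)

def triStep (k : ℕ) (A : ℕ → ℕ → ℤ) (l : TermList (Fin (k + 1)) ℤ) : TermList (Fin k) ℤ :=
  l.flatMap fun t =>
    if t.2 (Fin.last k) = 0 then []
    else mul [(t.1, fun i => t.2 i.castSucc)] (pow (linearForm k A) (t.2 (Fin.last k) - 1))

def tri : (k : ℕ) → (ℕ → ℕ → ℤ) → TermList (Fin k) ℤ → ℤ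
  | 0, _, l => (l.map Prod.fst).sum
  | k + 1, A, l => tri k A (triStep k A l)

theorem toMvPolynomial_linearForm (k : ℕ) (A : ℕ → ℕ → ℤ) :
    toMvPolynomial (linearForm k A) = ∑ i : Fin k, C (A i k) * X i := by
  rw [Fin.sum_univ_def, linearForm, toMvPolynomial, List.map_map]
  congr 1
  refine List.map_congr_left fun i _ => ?_
  rw [Function.comp_apply, Finsupp.equivFunOnFinite_symm_single, C_mul_X_eq_monomial]

end TermList

theorem monomial_equivFunOnFinite_symm {σ R : Type*} [Fintype σ] [CommSemiring R]
    (e : σ → ℕ) (c : R) :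
    monomial (Finsupp.equivFunOnFinite.symm e) c = C c * ∏ i, X i ^ e i := by
  rw [monomial_eq, Finsupp.prod_fintype _ _ fun _ => pow_zero _]
  rfl

theorem triStep_zero (k : ℕ) (A : ℕ → ℕ → ℤ) : triStep k A 0 = 0 := by
  simp [triStep]

theorem triStep_add (k : ℕ) (A : ℕ → ℕ → ℤ) (f g : MvPolynomial (Fin (k + 1)) ℤ) :
    triStep k A (f + g) = triStep k A f + triStep k A g := by
  classical
  have hsum : ∀ f : MvPolynomial (Fin (k + 1)) ℤ, triStep k A f =
      Finsupp.sum (AddMonoidAlgebra.coeff f) fun m c =>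
        if m (Fin.last k) = 0 then 0
        else C c * monomial (Finsupp.equivFunOnFinite.symm fun i : Fin k => m i.castSucc) 1 *
          (∑ i : Fin k, C (A i k) * X i) ^ (m (Fin.last k) - 1) :=
    fun _ => rfl
  rw [hsum, hsum, hsum, AddMonoidAlgebra.coeff_add, Finsupp.sum_add_index']
  · intro m; split <;> simp
  · intro m c d; split <;> simp [add_mul]

theorem triStep_monomial (k : ℕ) (A : ℕ → ℕ → ℤ) (m : Fin (k + 1) →₀ ℕ) (c : ℤ) :
    triStep k A (monomial m c) =
      if m (Fin.last k) = 0 then 0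
      else monomial (Finsupp.equivFunOnFinite.symm fun i : Fin k => m i.castSucc) c *
        (∑ i : Fin k, C (A i k) * X i) ^ (m (Fin.last k) - 1) := by
  classical
  obtain rfl | hc := eq_or_ne c 0
  · simp [triStep]
  · rw [triStep, support_monomial, if_neg hc, Finset.sum_singleton, coeff_monomial, if_pos rfl,
      C_mul_monomial, mul_one]

theorem triStep_toMvPolynomial (k : ℕ) (A : ℕ → ℕ → ℤ) (l : TermList (Fin (k + 1)) ℤ) :
    triStep k A l.toMvPolynomial = (TermList.triStep k A l).toMvPolynomial := by
  induction l with
  | nil => exact triStep_zero k A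
  | cons t l ih =>
    have hcons : TermList.triStep k A (t :: l) =
        (if t.2 (Fin.last k) = 0 then []
         else TermList.mul [(t.1, fun i => t.2 i.castSucc)]
           (TermList.pow (TermList.linearForm k A) (t.2 (Fin.last k) - 1))) ++
          TermList.triStep k A l := rfl
    rw [TermList.toMvPolynomial_cons, triStep_add, ih, hcons, TermList.toMvPolynomial_append,
      triStep_monomial]
    congr 1
    simp only [Finsupp.coe_equivFunOnFinite_symm]
    by_cases hlast : t.2 (Fin.last k) = 0
    · simp [hlast]
    · simp only [hlast, if_false]
      simp [TermList.toMvPolynomial_linearForm]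

theorem Tri_toMvPolynomial (k : ℕ) (A : ℕ → ℕ → ℤ) (l : TermList (Fin k) ℤ) :
    Tri k A l.toMvPolynomial = TermList.tri k A l := by
  induction k with
  | zero => exact l.coeff_zero_toMvPolynomial
  | succ k ih => exact (congrArg (Tri k A) (triStep_toMvPolynomial k A l)).trans (ih _)

/-- Example 3: `T_{A_w}[(x₁x₂x₃ + x₁x₂x₅ + x₁x₄x₅ + x₃x₄x₅) ·
(x₂x₃ + x₂x₅ + x₄x₅)] = 1`  (variables `x_1,…,x_5` are `X 0,…,X 4`). -/
theorem triangular_operator_Aw_structure_constant :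
    Tri 5 Aw
      ((MvPolynomial.X 0 * MvPolynomial.X 1 * MvPolynomial.X 2 +
        MvPolynomial.X 0 * MvPolynomial.X 1 * MvPolynomial.X 4 +
        MvPolynomial.X 0 * MvPolynomial.X 3 * MvPolynomial.X 4 +
        MvPolynomial.X 2 * MvPolynomial.X 3 * MvPolynomial.X 4) *
       (MvPolynomial.X 1 * MvPolynomial.X 2 +
        MvPolynomial.X 1 * MvPolynomial.X 4 +
        MvPolynomial.X 3 * MvPolynomial.X 4)) = 1 := by
  have hfirst : (X 0 * X 1 * X 2 + X 0 * X 1 * X 4 + X 0 * X 3 * X 4 + X 2 * X 3 * X 4 :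
      MvPolynomial (Fin 5) ℤ) = TermList.toMvPolynomial [(1, ![1, 1, 1, 0, 0]),
        (1, ![1, 1, 0, 0, 1]), (1, ![1, 0, 0, 1, 1]), (1, ![0, 0, 1, 1, 1])] := by
    simp [monomial_equivFunOnFinite_symm, Fin.prod_univ_five]
    ring
  have hsecond : (X 1 * X 2 + X 1 * X 4 + X 3 * X 4 : MvPolynomial (Fin 5) ℤ) =
      TermList.toMvPolynomial
        [(1, ![0, 1, 1, 0, 0]), (1, ![0, 1, 0, 0, 1]), (1, ![0, 0, 0, 1, 1])] := by
    simp [monomial_equivFunOnFinite_symm, Fin.prod_univ_five]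
    ring
  rw [hfirst, hsecond, ← TermList.toMvPolynomial_mul, Tri_toMvPolynomial]
  decide
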